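/- Let G be a connected graph on n vertices with toughness τ(G) < 1. Then n + (1-τ(G))/τ(G) ≤ max{n + c(S) - |S| : S ⊆ [n], c(S) ≥ 2 or S = ∅} ≤ n + (n-1)(1-τ(G)). -/

import Mathlib

open SimpleGraph MvPolynomial

/-- Number of connected components of the graph obtained from `G` by deleting
the vertices in `S` (the induced subgraph on the complement of `S`). -/
noncomputable def numComp {V : Type*} (G : SimpleGraph V) (S : Finset V) : ℕ :=
  Nat.card ((G.induce ((↑S : Set V)ᶜ)).ConnectedComponent)

/-- `G` is `ℓ`-vertex-connected: `ℓ < |V|` and deleting fewer than `ℓ` vertices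
leaves the graph connected. -/
def lVertexConnected {V : Type*} [Fintype V] (G : SimpleGraph V) (ℓ : ℕ) : Prop :=
  ℓ < Fintype.card V ∧
    ∀ S : Finset V, S.card < ℓ → (G.induce ((↑S : Set V)ᶜ)).Connected

/-! Let `S₀` attain `τ = a / c` with `a = |S₀| ≥ 1` and `c = c(S₀)`. Then `(1 - τ) / τ = (c - a) / a ≤ c - a`,
and `n + c - a ≤ M`. Conversely, every `S` with `c(S) ≥ 2` has `c(S) - |S| ≤ c(S) (1 - τ) ≤ (n - 1) (1 - τ)`,
as `τ ≤ |S| / c(S)` and `|S| ≥ 1`; the value `1` of `S = ∅` is at most `c - a`, a positive integer since `τ < 1`. -/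

namespace SimpleGraph

variable {V : Type*} {G : SimpleGraph V}

lemma Connected.numComp_empty (hG : G.Connected) : numComp G ∅ = 1 := by
  rw [numComp, Finset.coe_empty, Set.compl_empty,
    Nat.card_congr (induceUnivIso G).connectedComponentEquiv, Nat.card_eq_one_iff_unique]
  exact ⟨hG.preconnected.subsingleton_connectedComponent, hG.nonempty.map G.connectedComponentMk⟩

variable (G) in
lemma numComp_add_card_le [Fintype V] (S : Finset V) :
    numComp G S + S.card ≤ Fintype.card V := by
  classical
  have hsurj : numComp G S ≤ Nat.card ((↑S : Set V)ᶜ : Set V) :=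
    Nat.card_le_card_of_surjective _ (ConnectedComponent.ind fun v => ⟨v, rfl⟩)
  rw [← Finset.coe_compl, Nat.card_coe_set_eq, Set.ncard_coe_finset, Finset.card_compl] at hsurj
  have := S.card_le_univ
  omega

lemma Connected.nonempty_of_two_le_numComp (hG : G.Connected)
    {S : Finset V} (hS : 2 ≤ numComp G S) : S.Nonempty := by
  rw [Finset.nonempty_iff_ne_empty]
  rintro rfl
  rw [hG.numComp_empty] at hS
  omega

lemma Connected.numComp_sub_card_le [Fintype V] (hG : G.Connected) {τ : ℚ}
    (hτ : τ ≤ 1) {S : Finset V} (hS : 2 ≤ numComp G S) (hτS : τ ≤ S.card / numComp G S) :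
    (numComp G S : ℚ) - S.card ≤ (Fintype.card V - 1) * (1 - τ) := by
  have hc : (0 : ℚ) < numComp G S := by exact_mod_cast (by omega : 0 < numComp G S)
  have hτc : τ * numComp G S ≤ S.card := (le_div_iff₀ hc).1 hτS
  have hcV : (numComp G S : ℚ) ≤ Fintype.card V - 1 := by
    have := G.numComp_add_card_le S
    have := (hG.nonempty_of_two_le_numComp hS).card_pos
    rw [le_sub_iff_add_le]
    exact_mod_cast (by omega : numComp G S + 1 ≤ Fintype.card V)
  calc (numComp G S : ℚ) - S.card ≤ numComp G S * (1 - τ) := by linarith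
    _ ≤ (Fintype.card V - 1) * (1 - τ) := mul_le_mul_of_nonneg_right hcV (sub_nonneg.2 hτ)

end SimpleGraph

lemma one_sub_div_div_div_le_sub {K : Type*} [Field K] [LinearOrder K] [IsStrictOrderedRing K]
    {a c : K} (ha : 1 ≤ a) (hac : a ≤ c) : (1 - a / c) / (a / c) ≤ c - a := by
  have hc : c ≠ 0 := (zero_lt_one.trans_le (ha.trans hac)).ne'
  rw [show (1 - a / c) / (a / c) = (c - a) / a by field_simp]
  exact div_le_self (sub_nonneg.2 hac) ha

theorem dim_bounds_of_toughness {n : ℕ} (G : SimpleGraph (Fin n))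
    (hconn : G.Connected) (τ : ℚ)
    (hτ : IsLeast {q : ℚ | ∃ S : Finset (Fin n), 2 ≤ numComp G S ∧
      q = (S.card : ℚ) / (numComp G S : ℚ)} τ)
    (hlt : τ < 1) (M : ℚ)
    (hM : IsGreatest {d : ℚ | ∃ S : Finset (Fin n),
      (2 ≤ numComp G S ∨ S = ∅) ∧
      d = (n : ℚ) + (numComp G S : ℚ) - (S.card : ℚ)} M) :
    (n : ℚ) + (1 - τ) / τ ≤ M ∧ M ≤ (n : ℚ) + ((n : ℚ) - 1) * (1 - τ) := by
  obtain ⟨⟨S₀, hS₀, rfl⟩, hτ_le⟩ := hτ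
  obtain ⟨⟨S₁, hS₁, rfl⟩, hM_ge⟩ := hM
  have hc₀ : (0 : ℚ) < numComp G S₀ := by exact_mod_cast (by omega : 0 < numComp G S₀)
  have hlt₀ : S₀.card < numComp G S₀ := by exact_mod_cast (div_lt_one hc₀).1 hlt
  have hexcess {S : Finset (Fin n)} (hS : 2 ≤ numComp G S) :
      (numComp G S : ℚ) - S.card ≤ (n - 1) * (1 - S₀.card / numComp G S₀) := by
    simpa using hconn.numComp_sub_card_le hlt.le hS (hτ_le ⟨S, hS, rfl⟩)
  constructor
  · have ha₀ : (1 : ℚ) ≤ S₀.card := by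
      exact_mod_cast (hconn.nonempty_of_two_le_numComp hS₀).card_pos
    have hac₀ : (S₀.card : ℚ) ≤ numComp G S₀ := by exact_mod_cast hlt₀.le
    linarith [one_sub_div_div_div_le_sub ha₀ hac₀, hM_ge ⟨S₀, Or.inl hS₀, rfl⟩]
  · rcases hS₁ with hS₁ | rfl
    · linarith [hexcess hS₁]
    · have : (S₀.card : ℚ) + 1 ≤ numComp G S₀ := by exact_mod_cast hlt₀
      simp only [hconn.numComp_empty, Finset.card_empty]
      push_cast
      linarith [hexcess hS₀]
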